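/- arXiv:1908.06634 — 3 statements merged into one kernel-verified Lean document; each statement's English description precedes it below -/
import Mathlib

section
/- Consider min Σᵢ fᵢ(xᵢ) over x ∈ ℝ^N subject to Σᵢ wᵢxᵢ = b and x̲ᵢ ≤ xᵢ ≤ x̄ᵢ, with all wᵢ > 0, fᵢ convex differentiable, and the feasible set with strict inequalities nonempty. If (x*, ν*, μ̲*, μ̄*) satisfies the KKT conditions, then |ν*| ≤ (1/w̲) · maxᵢ max_{x̲ᵢ ≤ x ≤ x̄ᵢ} |fᵢ'(x)|, where w̲ = minᵢ wᵢ. -/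
/-- Bound on the equality-constraint multiplier for the
single-equality resource allocation problem with box constraints:
|ν*| ≤ (1/w̲)·maxᵢ max_{x̲ᵢ ≤ x ≤ x̄ᵢ} |fᵢ'(x)|. -/
theorem nu_bound_resource_allocation (N : ℕ) (hN : 0 < N)
    (f : Fin N → ℝ → ℝ)
    (hconv : ∀ i, ConvexOn ℝ Set.univ (f i))
    (hdiff : ∀ i, Differentiable ℝ (f i))
    (w : Fin N → ℝ) (hw : ∀ i, 0 < w i) (b : ℝ)
    (xlo xhi : Fin N → ℝ)
    (hfeas : ∃ x : Fin N → ℝ, (∀ i, xlo i < x i ∧ x i < xhi i) ∧ ∑ i, w i * x i = b)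
    (xs : Fin N → ℝ) (ν : ℝ) (μlo μhi : Fin N → ℝ)
    (hstat : ∀ i, deriv (f i) (xs i) + w i * ν - μlo i + μhi i = 0)
    (heq : ∑ i, w i * xs i = b)
    (hbox : ∀ i, xlo i ≤ xs i ∧ xs i ≤ xhi i)
    (hcs1 : ∀ i, μlo i * (xlo i - xs i) = 0)
    (hcs2 : ∀ i, μhi i * (xs i - xhi i) = 0)
    (hμ1 : ∀ i, 0 ≤ μlo i) (hμ2 : ∀ i, 0 ≤ μhi i)
    (M : ℝ) (hM : ∀ i, ∀ x ∈ Set.Icc (xlo i) (xhi i), |deriv (f i) x| ≤ M)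
    (wmin : ℝ) (hwmin : 0 < wmin) (hwmin' : ∀ i, wmin ≤ w i) :
    |ν| ≤ M / wmin := by

  obtain ⟨xt, hxt, hsum⟩ := hfeas
  have i0 : Fin N := ⟨0, hN⟩
  have hM0 : 0 ≤ M := le_trans (abs_nonneg _)
    (hM i0 (xs i0) ⟨(hbox i0).1, (hbox i0).2⟩)
  have hDb : ∀ i, |deriv (f i) (xs i)| ≤ M := fun i =>
    hM i (xs i) ⟨(hbox i).1, (hbox i).2⟩
  rw [abs_le]
  constructor
  · by_contra h
    push_neg at h
    have hν : ν < 0 := lt_of_lt_of_le h (neg_nonpos_of_nonneg (div_nonneg hM0 hwmin.le))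
    -- all at upper bounds
    have hall : ∀ i, xs i = xhi i := by
      intro i
      have h1 : wmin * (-ν) > M := by
        have := (div_lt_iff₀ hwmin).mp (lt_neg_of_lt_neg h)
        linarith [mul_comm wmin (-ν)]
      have h2 : w i * (-ν) ≥ wmin * (-ν) :=
        mul_le_mul_of_nonneg_right (hwmin' i) (by linarith)
      have hd := (abs_le.mp (hDb i)).2
      have hμ : 0 < μhi i := by
        have := hstat i
        nlinarith [hμ1 i]
      have := hcs2 i
      have : xs i - xhi i = 0 := by
        rcases mul_eq_zero.mp this with h' | h'
        · exact absurd h' (ne_of_gt hμ)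
        · exact h'
      linarith
    have : ∑ i, w i * xt i < ∑ i, w i * xs i := by
      apply Finset.sum_lt_sum_of_nonempty
      · exact Finset.univ_nonempty_iff.mpr ⟨i0⟩
      · intro i _
        have := (hxt i).2
        have := hall i
        nlinarith [hw i]
    linarith [hsum, heq]
  · by_contra h
    push_neg at h
    have hν : 0 < ν := lt_of_le_of_lt (div_nonneg hM0 hwmin.le) h
    have hall : ∀ i, xs i = xlo i := by
      intro i
      have h1 : wmin * ν > M := by
        have := (div_lt_iff₀ hwmin).mp h
        linarith [mul_comm wmin ν]
      have h2 : w i * ν ≥ wmin * ν :=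
        mul_le_mul_of_nonneg_right (hwmin' i) hν.le
      have hd := (abs_le.mp (hDb i)).1
      have hμ : 0 < μlo i := by
        have := hstat i
        nlinarith [hμ2 i]
      have := hcs1 i
      have : xlo i - xs i = 0 := by
        rcases mul_eq_zero.mp this with h' | h'
        · exact absurd h' (ne_of_gt hμ)
        · exact h'
      linarith
    have : ∑ i, w i * xs i < ∑ i, w i * xt i := by
      apply Finset.sum_lt_sum_of_nonempty
      · exact Finset.univ_nonempty_iff.mpr ⟨i0⟩
      · intro i _
        have := (hxt i).1
        have := hall i
        nlinarith [hw i]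
    linarith [hsum, heq]
end

section
/- Consider min Σᵢ fᵢ(xᵢ) subject to Σᵢ wᵢxᵢ = b and x̲ᵢ ≤ xᵢ ≤ x̄ᵢ with wᵢ > 0, fᵢ convex differentiable. For any KKT solution, every multiplier μ̲ᵢ*, μ̄ᵢ* is bounded by (1 + w̄/w̲)·maxⱼ max_{x̲ⱼ ≤ x ≤ x̄ⱼ}|fⱼ'(x)|, where w̄ = maxᵢ wᵢ and w̲ = minᵢ wᵢ. -/
/-- Bound on the inequality-constraint multipliers for the
single-equality resource allocation problem: every μ̲ᵢ*, μ̄ᵢ* is bounded by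
(1 + w̄/w̲)·maxⱼ max_{x̲ⱼ ≤ x ≤ x̄ⱼ} |fⱼ'(x)|. -/
theorem mu_bound_resource_allocation (N : ℕ) (hN : 0 < N)
    (f : Fin N → ℝ → ℝ)
    (hconv : ∀ i, ConvexOn ℝ Set.univ (f i))
    (hdiff : ∀ i, Differentiable ℝ (f i))
    (w : Fin N → ℝ) (hw : ∀ i, 0 < w i) (b : ℝ)
    (xlo xhi : Fin N → ℝ)
    (hfeas : ∃ x : Fin N → ℝ, (∀ i, xlo i < x i ∧ x i < xhi i) ∧ ∑ i, w i * x i = b)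
    (xs : Fin N → ℝ) (ν : ℝ) (μlo μhi : Fin N → ℝ)
    (hstat : ∀ i, deriv (f i) (xs i) + w i * ν - μlo i + μhi i = 0)
    (heq : ∑ i, w i * xs i = b)
    (hbox : ∀ i, xlo i ≤ xs i ∧ xs i ≤ xhi i)
    (hcs1 : ∀ i, μlo i * (xlo i - xs i) = 0)
    (hcs2 : ∀ i, μhi i * (xs i - xhi i) = 0)
    (hμ1 : ∀ i, 0 ≤ μlo i) (hμ2 : ∀ i, 0 ≤ μhi i)
    (M : ℝ) (hM : ∀ i, ∀ x ∈ Set.Icc (xlo i) (xhi i), |deriv (f i) x| ≤ M)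
    (wmin : ℝ) (hwmin : 0 < wmin) (hwmin' : ∀ i, wmin ≤ w i)
    (wmax : ℝ) (hwmax : ∀ i, w i ≤ wmax) :
    ∀ i, μlo i ≤ (1 + wmax / wmin) * M ∧ μhi i ≤ (1 + wmax / wmin) * M := by
  obtain ⟨xf, hxf, hxfeq⟩ := hfeas
  have hne : (Finset.univ : Finset (Fin N)).Nonempty := by
    simpa using Finset.univ_nonempty_iff.2 (Fin.pos_iff_nonempty.mp hN)
  have hxsIcc : ∀ i, xs i ∈ Set.Icc (xlo i) (xhi i) := fun i => ⟨(hbox i).1, (hbox i).2⟩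
  have hMs : ∀ i, |deriv (f i) (xs i)| ≤ M := fun i => hM i (xs i) (hxsIcc i)
  have hM0 : 0 ≤ M := le_trans (abs_nonneg _) (hMs ⟨0, hN⟩)
  -- claim 1 : wmin * ν ≤ M
  have claim1 : wmin * ν ≤ M := by
    by_contra h
    push_neg at h
    have hν : 0 < ν := by nlinarith
    have hall : ∀ i, xs i = xlo i := by
      intro i
      have h1 : wmin * ν ≤ w i * ν := by nlinarith [hwmin' i]
      have h2 : -M ≤ deriv (f i) (xs i) := (abs_le.mp (hMs i)).1
      have h3 : 0 < μlo i := by nlinarith [hstat i, hμ2 i]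
      have := hcs1 i
      have h4 : xlo i - xs i = 0 := by
        rcases mul_eq_zero.mp this with h | h
        · exact absurd h (ne_of_gt h3)
        · exact h
      linarith
    have hlt : ∑ i, w i * xs i < ∑ i, w i * xf i := by
      apply Finset.sum_lt_sum_of_nonempty hne
      intro i _
      have := (hxf i).1
      have := hall i
      nlinarith [hw i]
    linarith [heq, hxfeq]
  -- claim 2 : -M ≤ wmin * ν
  have claim2 : -M ≤ wmin * ν := by
    by_contra h
    push_neg at h
    have hν : ν < 0 := by nlinarith
    have hall : ∀ i, xs i = xhi i := by
      intro i
      have h1 : w i * ν ≤ wmin * ν := by nlinarith [hwmin' i]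
      have h2 : deriv (f i) (xs i) ≤ M := (abs_le.mp (hMs i)).2
      have h3 : 0 < μhi i := by nlinarith [hstat i, hμ1 i]
      have := hcs2 i
      have h4 : xs i - xhi i = 0 := by
        rcases mul_eq_zero.mp this with h | h
        · exact absurd h (ne_of_gt h3)
        · exact h
      linarith
    have hlt : ∑ i, w i * xf i < ∑ i, w i * xs i := by
      apply Finset.sum_lt_sum_of_nonempty hne
      intro i _
      have := (hxf i).2
      have := hall i
      nlinarith [hw i]
    linarith [heq, hxfeq]
  have hνabs : |ν| ≤ M / wmin := by
    rw [abs_le]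
    constructor
    · rw [← neg_div, div_le_iff₀ hwmin]
      linarith
    · rw [le_div_iff₀ hwmin]
      linarith
  have hwmax0 : 0 ≤ wmax := le_trans (le_of_lt hwmin) (le_trans (hwmin' ⟨0, hN⟩) (hwmax ⟨0, hN⟩))
  have hwν : ∀ i, |w i * ν| ≤ wmax * (M / wmin) := by
    intro i
    rw [abs_mul, abs_of_pos (hw i)]
    have h1 : w i * |ν| ≤ wmax * |ν| := by nlinarith [abs_nonneg ν, hwmax i]
    have h2 : wmax * |ν| ≤ wmax * (M / wmin) := by nlinarith
    linarith
  have hRHS : (1 + wmax / wmin) * M = M + wmax * (M / wmin) := by ring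
  have hRHS0 : 0 ≤ (1 + wmax / wmin) * M := by
    have : 0 ≤ wmax / wmin := div_nonneg hwmax0 (le_of_lt hwmin)
    nlinarith
  intro i
  have hlohi : xlo i < xhi i := lt_trans (hxf i).1 (hxf i).2
  constructor
  · rcases eq_or_lt_of_le (hμ1 i) with h0 | h0
    · linarith [hRHS0]
    · -- μlo i > 0 ⇒ xs i = xlo i ⇒ xs i < xhi i ⇒ μhi i = 0
      have h4 : xlo i - xs i = 0 := by
        rcases mul_eq_zero.mp (hcs1 i) with h | h
        · exact absurd h.symm (ne_of_lt h0)
        · exact h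
      have h5 : xs i - xhi i ≠ 0 := by intro h; linarith
      have h6 : μhi i = 0 := by
        rcases mul_eq_zero.mp (hcs2 i) with h | h
        · exact h
        · exact absurd h h5
      have := hstat i
      have h7 := (abs_le.mp (hMs i)).2
      have h8 := (abs_le.mp (hwν i)).2
      rw [hRHS]
      linarith
  · rcases eq_or_lt_of_le (hμ2 i) with h0 | h0
    · linarith [hRHS0]
    · have h4 : xs i - xhi i = 0 := by
        rcases mul_eq_zero.mp (hcs2 i) with h | h
        · exact absurd h.symm (ne_of_lt h0)
        · exact h
      have h5 : xlo i - xs i ≠ 0 := by intro h; linarith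
      have h6 : μlo i = 0 := by
        rcases mul_eq_zero.mp (hcs1 i) with h | h
        · exact h
        · exact absurd h h5
      have := hstat i
      have h7 := (abs_le.mp (hMs i)).1
      have h8 := (abs_le.mp (hwν i)).1
      rw [hRHS]
      linarith
end

section
/- Suppose the equality-constrained problem min Σᵢ₌₁^N fᵢ(xᵢ) s.t. Wx = b (fᵢ convex differentiable on ℝ^{nᵢ}) and the inequality-constrained problem adding x̲ᵢₗ ≤ xᵢₗ ≤ x̄ᵢₗ have KKT multipliers μ̲*, μ̄* all bounded by γ* at some solution. Then for γ > γ*, any minimizer of the exact-penalty problem min f(x) + γ Σᵢ (Σₗ max(0, x̲ᵢₗ − xᵢₗ) + Σₗ max(0, xᵢₗ − x̄ᵢₗ)) subject to Wx = b is also a minimizer of the original inequality-constrained problem. -/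
/-!
On the affine set `W x = b`, the gradient inequality at the KKT point `xs`, stationarity and
complementary slackness give `f xs ≤ f x + γ* · pen x`, where `pen` is the box penalty, because
each box multiplier lies in `[0, γ*]`. Penalized minimality of `xp` gives
`f xp + γ · pen xp ≤ f xs`, so `(γ - γ*) · pen xp ≤ 0` forces `pen xp = 0`, and then every
feasible `x` satisfies `f xp ≤ f xs ≤ f x`.
-/

open Finset Matrix

theorem ConvexOn.add_le_of_hasDerivAt_line {E : Type*} [AddCommGroup E] [Module ℝ E]
    {f : E → ℝ} (hf : ConvexOn ℝ Set.univ f) {x y : E} {d : ℝ}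
    (hd : HasDerivAt (fun t : ℝ => f (x + t • (y - x))) d 0) : f x + d ≤ f y := by
  have hline : ConvexOn ℝ Set.univ (fun t : ℝ => f (x + t • (y - x))) := by
    simpa [Function.comp_def, AffineMap.lineMap_apply_module', add_comm]
      using hf.comp_affineMap (AffineMap.lineMap x y)
  have := hline.le_slope_of_hasDerivAt (Set.mem_univ 0) (Set.mem_univ 1) one_pos hd
  simp only [slope_def_field, one_smul, add_sub_cancel, zero_smul, add_zero, sub_zero, div_one]
    at this
  linarith

theorem penalty_eq_zero_and_isMinOn_of_isMinOn_add_mul {α : Type*} {f P : α → ℝ}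
    {S : Set α} {xs xp : α} {c γ : ℝ} (hP : ∀ x, 0 ≤ P x) (hPxs : P xs = 0) (hxs : xs ∈ S)
    (hbound : ∀ x ∈ S, f xs ≤ f x + c * P x) (hcγ : c < γ) (hxp : xp ∈ S)
    (hmin : IsMinOn (fun x => f x + γ * P x) S xp) :
    P xp = 0 ∧ IsMinOn f {x | x ∈ S ∧ P x = 0} xp := by
  have hle : f xp + γ * P xp ≤ f xs := by simpa [hPxs] using hmin hxs
  have hPxp : P xp = 0 := by nlinarith [hbound xp hxp, hP xp]
  refine ⟨hPxp, isMinOn_iff.2 fun x ⟨hx, hPx⟩ => ?_⟩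
  have := hbound x hx
  simp only [hPxp, hPx, mul_zero, add_zero] at hle this
  exact hle.trans this

theorem Matrix.transpose_mulVec_dotProduct_eq_zero {m n : Type*} [Fintype m] [Fintype n]
    {W : Matrix m n ℝ} {x y : n → ℝ} (h : W *ᵥ x = W *ᵥ y) (ν : m → ℝ) :
    Wᵀ *ᵥ ν ⬝ᵥ (x - y) = 0 := by
  rw [mulVec_transpose, ← dotProduct_mulVec, mulVec_sub, h, sub_self, dotProduct_zero]

def boxPenalty {ι : Type*} [Fintype ι] (lo hi x : ι → ℝ) : ℝ :=
  ∑ i, (max 0 (lo i - x i) + max 0 (x i - hi i))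

theorem boxPenalty_nonneg {ι : Type*} [Fintype ι] (lo hi x : ι → ℝ) :
    0 ≤ boxPenalty lo hi x :=
  sum_nonneg fun _ _ => by positivity

theorem boxPenalty_eq_zero_iff {ι : Type*} [Fintype ι] {lo hi x : ι → ℝ} :
    boxPenalty lo hi x = 0 ↔ ∀ i, lo i ≤ x i ∧ x i ≤ hi i := by
  rw [boxPenalty, sum_eq_zero_iff_of_nonneg fun _ _ => by positivity]
  simp only [mem_univ, true_implies]
  refine forall_congr' fun i => ?_
  constructor
  · intro h
    constructor <;> linarith [le_max_right 0 (lo i - x i), le_max_right 0 (x i - hi i),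
      le_max_left 0 (lo i - x i), le_max_left 0 (x i - hi i)]
  · rintro ⟨hl, hh⟩
    rw [max_eq_left (by linarith), max_eq_left (by linarith), add_zero]

theorem mul_sub_le_mul_max_sub {μ c s h x : ℝ} (hμ : 0 ≤ μ) (hμc : μ ≤ c)
    (hcs : μ * (s - h) = 0) : μ * (x - s) ≤ c * max 0 (x - h) := by
  have : μ * (x - s) = μ * (x - h) := by linear_combination -hcs
  rw [this]
  nlinarith [le_max_left 0 (x - h), le_max_right 0 (x - h)]

theorem kkt_le_add_boxPenalty {ι κ : Type*} [Fintype ι] [Fintype κ] {f : (ι → ℝ) → ℝ}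
    (hconv : ConvexOn ℝ Set.univ f) {g : (ι → ℝ) → ι → ℝ}
    (hgrad : ∀ (x v : ι → ℝ), HasDerivAt (fun t : ℝ => f (x + t • v)) (∑ i, g x i * v i) 0)
    {W : Matrix κ ι ℝ} {lo hi xs : ι → ℝ} {ν : κ → ℝ} {μlo μhi : ι → ℝ} {c : ℝ}
    (hstat : ∀ i, g xs i + (Wᵀ *ᵥ ν) i - μlo i + μhi i = 0)
    (hcs : ∀ i, μlo i * (lo i - xs i) = 0 ∧ μhi i * (xs i - hi i) = 0)
    (hμ : ∀ i, 0 ≤ μlo i ∧ 0 ≤ μhi i) (hbound : ∀ i, μlo i ≤ c ∧ μhi i ≤ c)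
    {x : ι → ℝ} (hx : W *ᵥ x = W *ᵥ xs) :
    f xs ≤ f x + c * boxPenalty lo hi x := by
  have hgrad_ineq := hconv.add_le_of_hasDerivAt_line (hgrad xs (x - xs))
  have hg : g xs = μlo - μhi - Wᵀ *ᵥ ν := by
    funext i; simp only [Pi.sub_apply]; linarith [hstat i]
  have hmult : -(c * boxPenalty lo hi x) ≤ (μlo - μhi) ⬝ᵥ (x - xs) := by
    rw [boxPenalty, mul_sum, ← sum_neg_distrib]
    refine sum_le_sum fun i _ => ?_
    have hlo := mul_sub_le_mul_max_sub (s := -xs i) (h := -lo i) (x := -x i)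
      (hμ i).1 (hbound i).1 (by linear_combination (hcs i).1)
    have hhi := mul_sub_le_mul_max_sub (x := x i) (hμ i).2 (hbound i).2 (hcs i).2
    simp only [neg_sub_neg] at hlo
    simp only [Pi.sub_apply]
    linarith
  have hdot : ∑ i, g xs i * (x - xs) i = (μlo - μhi) ⬝ᵥ (x - xs) := by
    rw [← dotProduct, hg, sub_dotProduct, transpose_mulVec_dotProduct_eq_zero hx, sub_zero]
  linarith

theorem exact_penalty_general (m p : ℕ)
    (f : (Fin m → ℝ) → ℝ) (hconv : ConvexOn ℝ Set.univ f)
    (g : (Fin m → ℝ) → Fin m → ℝ)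
    (hgrad : ∀ (x v : Fin m → ℝ),
      HasDerivAt (fun t : ℝ => f (x + t • v)) (∑ i, g x i * v i) 0)
    (W : Matrix (Fin p) (Fin m) ℝ) (b : Fin p → ℝ) (lo hi : Fin m → ℝ)
    (xs : Fin m → ℝ) (ν : Fin p → ℝ) (μlo μhi : Fin m → ℝ) (γstar : ℝ)
    (hstat : ∀ i, g xs i + W.transpose.mulVec ν i - μlo i + μhi i = 0)
    (heq : W.mulVec xs = b)
    (hbox : ∀ i, lo i ≤ xs i ∧ xs i ≤ hi i)
    (hcs : ∀ i, μlo i * (lo i - xs i) = 0 ∧ μhi i * (xs i - hi i) = 0)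
    (hμ : ∀ i, 0 ≤ μlo i ∧ 0 ≤ μhi i)
    (hbound : ∀ i, μlo i ≤ γstar ∧ μhi i ≤ γstar)
    (γ : ℝ) (hγ : γstar < γ)
    (xp : Fin m → ℝ) (hxp : W.mulVec xp = b)
    (hxpmin : IsMinOn
      (fun x => f x + γ * ∑ i, (max 0 (lo i - x i) + max 0 (x i - hi i)))
      {x | W.mulVec x = b} xp) :
    (∀ i, lo i ≤ xp i ∧ xp i ≤ hi i) ∧
      IsMinOn f {x | W.mulVec x = b ∧ ∀ i, lo i ≤ x i ∧ x i ≤ hi i} xp := by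
  have hkkt : ∀ x ∈ {x | W *ᵥ x = b}, f xs ≤ f x + γstar * boxPenalty lo hi x :=
    fun x hx => kkt_le_add_boxPenalty hconv hgrad hstat hcs hμ hbound (hx.trans heq.symm)
  obtain ⟨hpen, hmin⟩ := penalty_eq_zero_and_isMinOn_of_isMinOn_add_mul
    (boxPenalty_nonneg lo hi) (boxPenalty_eq_zero_iff.2 hbox) heq hkkt hγ hxp hxpmin
  refine ⟨boxPenalty_eq_zero_iff.1 hpen, ?_⟩
  simpa only [Set.mem_ofPred_eq, boxPenalty_eq_zero_iff] using hmin

/-- Exact penalty theorem. If the convex problem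
min f(x) s.t. Wx = b, lo ≤ x ≤ hi has a KKT point whose box-constraint
multipliers are all bounded by γ*, then for any γ > γ*, every minimizer of the
exact-penalty problem min f(x) + γ Σᵢ (max(0, loᵢ − xᵢ) + max(0, xᵢ − hiᵢ))
subject to Wx = b is also a minimizer of the original problem. -/
theorem exact_penalty (m p : ℕ)
    (f : (Fin m → ℝ) → ℝ) (hconv : ConvexOn ℝ Set.univ f)
    (hdiff : Differentiable ℝ f)
    (g : (Fin m → ℝ) → Fin m → ℝ)
    (hgrad : ∀ (x v : Fin m → ℝ),
      HasDerivAt (fun t : ℝ => f (x + t • v)) (∑ i, g x i * v i) 0)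
    (W : Matrix (Fin p) (Fin m) ℝ) (b : Fin p → ℝ) (lo hi : Fin m → ℝ)
    (xs : Fin m → ℝ) (ν : Fin p → ℝ) (μlo μhi : Fin m → ℝ) (γstar : ℝ)
    (hstat : ∀ i, g xs i + W.transpose.mulVec ν i - μlo i + μhi i = 0)
    (heq : W.mulVec xs = b)
    (hbox : ∀ i, lo i ≤ xs i ∧ xs i ≤ hi i)
    (hcs : ∀ i, μlo i * (lo i - xs i) = 0 ∧ μhi i * (xs i - hi i) = 0)
    (hμ : ∀ i, 0 ≤ μlo i ∧ 0 ≤ μhi i)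
    (hbound : ∀ i, μlo i ≤ γstar ∧ μhi i ≤ γstar)
    (hmin : IsMinOn f {x | W.mulVec x = b ∧ ∀ i, lo i ≤ x i ∧ x i ≤ hi i} xs)
    (γ : ℝ) (hγ : γstar < γ)
    (xp : Fin m → ℝ) (hxp : W.mulVec xp = b)
    (hxpmin : IsMinOn
      (fun x => f x + γ * ∑ i, (max 0 (lo i - x i) + max 0 (x i - hi i)))
      {x | W.mulVec x = b} xp) :
    (∀ i, lo i ≤ xp i ∧ xp i ≤ hi i) ∧
      IsMinOn f {x | W.mulVec x = b ∧ ∀ i, lo i ≤ x i ∧ x i ≤ hi i} xp :=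
  exact_penalty_general m p f hconv g hgrad W b lo hi xs ν μlo μhi γstar hstat heq hbox hcs hμ
    hbound γ hγ xp hxp hxpmin
end
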